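/- In inverse transform sampling, condition on the generated token y_i, its distribution μ_i, and the value k = π_i(y_i). Then u_i is uniform on the interval [μ_i({y : π_i(y) < k}), μ_i({y : π_i(y) ≤ k})], and hence E[u_i | y_i, π_i(y_i) = k] = μ_i(y_i)/2 + μ_i({y : π_i(y) < k}). -/

import Mathlib

open MeasureTheory ProbabilityTheory Finset

/-- The inverse transform sampler: `Γ((π,u), μ) = π⁻¹(min {π l : μ {j : π j ≤ π l} ≥ u})`.
(If the set is empty, which never happens for `u ≤ 1`, a default token is returned.) -/
noncomputable def invTransform {V : ℕ} [NeZero V] (π : Equiv.Perm (Fin V))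
    (μ : Fin V → ℝ) (u : ℝ) : Fin V :=
  π.symm
    (((Finset.univ.filter fun l : Fin V =>
        u ≤ ∑ j ∈ Finset.univ.filter fun j : Fin V => π j ≤ π l, μ j).image
          fun l => π l).min.untopD ⟨0, Nat.pos_of_ne_zero (NeZero.ne V)⟩)

/-! Write `F k = ∑_{π j ≤ k} μ j` for the cumulative mass in the order given by `π`. For
`0 < u ≤ 1` the sampler returns `y` exactly when `π y` is the least rank with `u ≤ F (π y)`, and
since `F` increases by `μ y` at `π y`, this happens exactly when `u ∈ (F (π y) - μ y, F (π y)]`.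
Up to the null set `{0}`, the event `{Γ = y}` inside `[0, 1]` is therefore this interval, so
conditioning the uniform law on it gives the uniform law on the interval, whose mean is its
midpoint. -/

section Measure

variable {Ω : Type*} [MeasurableSpace Ω] {μ : Measure Ω} {s t : Set Ω}

lemma cond_restrict (hs : MeasurableSet s) : (μ.restrict s)[|t] = μ[|t ∩ s] := by
  rw [ProbabilityTheory.cond, ProbabilityTheory.cond, Measure.restrict_apply' hs,
    Measure.restrict_restrict' hs]

lemma cond_congr_ae (h : s =ᵐ[μ] t) : μ[|s] = μ[|t] := by
  rw [ProbabilityTheory.cond, ProbabilityTheory.cond, measure_congr h,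
    Measure.restrict_congr_set h]

lemma integral_id_cond_Ioc {a b : ℝ} (hab : a < b) :
    ∫ x, x ∂(volume[|Set.Ioc a b]) = (a + b) / 2 := by
  rw [ProbabilityTheory.cond, integral_smul_measure, ← intervalIntegral.integral_of_le hab.le,
    integral_id, Real.volume_Ioc, ENNReal.toReal_inv, ENNReal.toReal_ofReal (sub_nonneg.2 hab.le),
    smul_eq_mul]
  field_simp [sub_ne_zero.2 hab.ne']
  ring

end Measure

section Quantile

variable {α : Type*} [LinearOrder α] [LocallyFiniteOrderBot α]

lemma sum_Iic_eq_sum_Iio_add (ν : α → ℝ) (k : α) :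
    ∑ i ∈ Iic k, ν i = ∑ i ∈ Iio k, ν i + ν k := by
  rw [Iic_eq_cons_Iio, sum_cons, add_comm]

lemma isLeast_setOf_le_sum_Iic_iff {ν : α → ℝ} (hν : ∀ i, 0 ≤ ν i) {u : ℝ} (hu : 0 < u) (k : α) :
    IsLeast {k' | u ≤ ∑ i ∈ Iic k', ν i} k ↔
      u ∈ Set.Ioc (∑ i ∈ Iio k, ν i) (∑ i ∈ Iio k, ν i + ν k) := by
  rw [← sum_Iic_eq_sum_Iio_add]
  constructor
  · rintro ⟨hk, hmin⟩
    refine ⟨lt_of_not_ge fun hle => ?_, hk⟩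
    obtain hempty | hne := (Iio k).eq_empty_or_nonempty
    · simp only [hempty, sum_empty] at hle
      exact hle.not_gt hu
    · have hlast : Iio k ⊆ Iic ((Iio k).max' hne) := fun i hi => mem_Iic.2 (le_max' _ i hi)
      have := hmin (hle.trans (sum_le_sum_of_subset_of_nonneg hlast fun i _ _ => hν i))
      exact (mem_Iio.1 (max'_mem _ hne)).not_ge this
  · rintro ⟨hlt, hle⟩
    refine ⟨hle, fun k' hk' => le_of_not_gt fun hk'k => ?_⟩
    have : ∑ i ∈ Iic k', ν i ≤ ∑ i ∈ Iio k, ν i :=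
      sum_le_sum_of_subset_of_nonneg (fun i hi => mem_Iio.2 ((mem_Iic.1 hi).trans_lt hk'k))
        fun i _ _ => hν i
    exact (hk'.trans this).not_gt hlt

end Quantile

lemma sum_filter_comp_equiv {β α : Type*} [Fintype β] [Fintype α] (e : β ≃ α) (p : α → Prop)
    [DecidablePred p] (f : β → ℝ) :
    ∑ z ∈ univ.filter fun z => p (e z), f z = ∑ i ∈ univ.filter p, f (e.symm i) := by
  rw [sum_filter, sum_filter]
  exact Fintype.sum_equiv e _ _ fun z => by simp

section InvTransform

variable {V : ℕ} (π : Equiv.Perm (Fin V))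

lemma sum_filter_perm_le (μ : Fin V → ℝ) (l : Fin V) :
    ∑ j ∈ univ.filter fun j => π j ≤ π l, μ j = ∑ i ∈ Iic (π l), μ (π.symm i) := by
  rw [sum_filter_comp_equiv π (· ≤ π l), filter_ge_eq_Iic]

lemma sum_filter_perm_lt (μ : Fin V → ℝ) (l : Fin V) :
    ∑ j ∈ univ.filter fun j => π j < π l, μ j = ∑ i ∈ Iio (π l), μ (π.symm i) := by
  rw [sum_filter_comp_equiv π (· < π l), filter_gt_eq_Iio]

lemma invTransform_eq_iff [NeZero V] {μ : Fin V → ℝ} (hsum : ∑ k, μ k = 1) {u : ℝ} (hu : u ≤ 1)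
    (y : Fin V) :
    invTransform π μ u = y ↔ IsLeast {k | u ≤ ∑ i ∈ Iic k, μ (π.symm i)} (π y) := by
  set t := univ.filter fun k => u ≤ ∑ i ∈ Iic k, μ (π.symm i)
  have himage :
      (univ.filter fun l => u ≤ ∑ j ∈ univ.filter fun j => π j ≤ π l, μ j).image π = t := by
    ext k
    simp only [sum_filter_perm_le, mem_image, mem_filter, mem_univ, true_and, t]
    exact ⟨by rintro ⟨l, hl, rfl⟩; exact hl, fun hk => ⟨π.symm k, by simpa using hk, by simp⟩⟩
  have hne : t.Nonempty := by
    have htop : Iic ((univ : Finset (Fin V)).max' univ_nonempty) = univ :=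
      eq_univ_of_forall fun i => mem_Iic.2 (le_max' _ _ (mem_univ i))
    refine ⟨univ.max' univ_nonempty, ?_⟩
    simpa [t, htop, π.symm.sum_comp μ, hsum] using hu
  rw [invTransform, himage, ← coe_min' hne, WithTop.untopD_coe, Equiv.symm_apply_eq]
  have hleast := t.isLeast_min' hne
  simp only [t, coe_filter, mem_univ, true_and] at hleast
  exact ⟨fun h => h ▸ hleast, hleast.unique⟩

lemma setOf_invTransform_eq_inter_Ioc [NeZero V] {μ : Fin V → ℝ} (hμ : ∀ k, 0 ≤ μ k)
    (hsum : ∑ k, μ k = 1) (y : Fin V) :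
    {u | invTransform π μ u = y} ∩ Set.Ioc 0 1 =
      Set.Ioc (∑ i ∈ Iio (π y), μ (π.symm i)) (∑ i ∈ Iio (π y), μ (π.symm i) + μ y) := by
  have hμπ : ∀ i, 0 ≤ μ (π.symm i) := fun i => hμ _
  have hleast_iff {u : ℝ} (hu : u ∈ Set.Ioc 0 1) := (invTransform_eq_iff π hsum hu.2 y).trans
    (isLeast_setOf_le_sum_Iic_iff hμπ hu.1 (π y))
  have hsub : Set.Ioc (∑ i ∈ Iio (π y), μ (π.symm i)) (∑ i ∈ Iio (π y), μ (π.symm i) + μ y) ⊆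
      Set.Ioc 0 1 := by
    refine Set.Ioc_subset_Ioc (sum_nonneg fun i _ => hμπ i) ?_
    calc ∑ i ∈ Iio (π y), μ (π.symm i) + μ y = ∑ i ∈ Iic (π y), μ (π.symm i) := by
          rw [sum_Iic_eq_sum_Iio_add, Equiv.symm_apply_apply]
      _ ≤ ∑ i, μ (π.symm i) := sum_le_univ_sum_of_nonneg hμπ
      _ = 1 := by rw [π.symm.sum_comp μ, hsum]
  ext u
  refine ⟨fun ⟨hy, hu⟩ => ?_, fun hu => ⟨(hleast_iff (hsub hu)).2 ?_, hsub hu⟩⟩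
  · simpa using (hleast_iff hu).1 hy
  · simpa using hu

end InvTransform

/-- Conditionally on the generated token `y` (and the permutation `π`), the uniform
variable `u` driving inverse transform sampling is uniform on the interval
`(μ{z : π z < π y}, μ{z : π z ≤ π y}]`, whose length is `μ y`; in particular its
conditional expectation is `μ y / 2 + μ{z : π z < π y}`. -/
theorem invTransform_cond_uniform {V : ℕ} [NeZero V] (π : Equiv.Perm (Fin V))
    (μp : Fin V → ℝ) (hμ : ∀ k, 0 ≤ μp k) (hsum : ∑ k, μp k = 1)
    (y : Fin V) (hy : 0 < μp y) :
    ProbabilityTheory.cond (volume.restrict (Set.Icc (0:ℝ) 1))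
        {u | invTransform π μp u = y}
      = ProbabilityTheory.cond volume
          (Set.Ioc (∑ z ∈ Finset.univ.filter fun z : Fin V => π z < π y, μp z)
            ((∑ z ∈ Finset.univ.filter fun z : Fin V => π z < π y, μp z) + μp y))
    ∧ (∫ u, u ∂(ProbabilityTheory.cond (volume.restrict (Set.Icc (0:ℝ) 1))
          {u | invTransform π μp u = y}))
        = μp y / 2 + ∑ z ∈ Finset.univ.filter fun z : Fin V => π z < π y, μp z := by
  rw [sum_filter_perm_lt]
  have hae : ({u | invTransform π μp u = y} ∩ Set.Icc 0 1 : Set ℝ) =ᵐ[volume]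
      Set.Ioc (∑ i ∈ Iio (π y), μp (π.symm i)) (∑ i ∈ Iio (π y), μp (π.symm i) + μp y) := by
    rw [← setOf_invTransform_eq_inter_Ioc π hμ hsum y]
    exact Filter.EventuallyEq.rfl.inter Ioc_ae_eq_Icc.symm
  have hcond := (cond_restrict measurableSet_Icc).trans (cond_congr_ae hae)
  refine ⟨hcond, ?_⟩
  rw [hcond, integral_id_cond_Ioc (lt_add_of_pos_right _ hy)]
  ring
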